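/- There exists a continuous excursion function f : [0,1] → [0,∞) whose graph G_f = {(x, f(x)) : x ∈ [0,1]} ⊂ ℝ² is a bi-Lipschitz image of the unit interval and hence has Assouad dimension equal to 1, while the continuum tree T_f = ([0,1]/≈_f, d_f) is starry (and therefore has infinite Assouad dimension and is not doubling). -/

import Mathlib

open Set

/-- The continuum-tree distance associated to an excursion function `f`. -/
noncomputable def treeDist (f : ℝ → ℝ) (x y : ℝ) : ℝ :=
  f x + f y - 2 * sInf (f '' Set.Icc (min x y) (max x y))

/-- The continuum-tree distance restricted to `[0,1]`; the continuum tree `T_f` is the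
quotient metric space of `([0,1], dIcc f)` by identifying points at distance `0`. -/
noncomputable def dIcc (f : ℝ → ℝ) (a b : Set.Icc (0 : ℝ) 1) : ℝ :=
  treeDist f a b


/-- The Euclidean distance between the points `(a, f a)` and `(b, f b)` of the graph of `f`,
for parameters `a, b ∈ [0,1]`; the graph `G_f ⊂ ℝ²` with the Euclidean metric is isometric to
`([0,1], dGraph f)` via `x ↦ (x, f x)`. -/
noncomputable def dGraph (f : ℝ → ℝ) (a b : Set.Icc (0 : ℝ) 1) : ℝ :=
  Real.sqrt (((a : ℝ) - b) ^ 2 + (f a - f b) ^ 2)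
/-- A pseudometric-like distance function `d` admits an `(A,η)`-approximate `n`-star. -/
def HasStarD {α : Type*} (d : α → α → ℝ) (A η : ℝ) (n : ℕ) : Prop :=
  ∃ ρ : ℝ, 0 < ρ ∧ ∃ x : Fin (n + 1) → α,
    (∀ i j : Fin (n + 1), i ≠ 0 → j ≠ 0 → i ≠ j →
      (A - η) * ρ ≤ d (x i) (x j) ∧ d (x i) (x j) ≤ A * ρ) ∧
    (∀ i : Fin (n + 1), i ≠ 0 → ρ ≤ d (x 0) (x i) ∧ d (x 0) (x i) ≤ (1 + η) * ρ)

/-- The distance function `d` is starry. -/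
def StarryD {α : Type*} (d : α → α → ℝ) : Prop :=
  ∃ A η : ℝ, 1 < A ∧ 0 < η ∧ η < (A - 1) / 2 ∧
    ∀ n : ℕ, ∃ An : ℝ, A ≤ An ∧ HasStarD d An η n

/-- The distance function `d` is doubling: some `K` balls of radius `r/2` cover each ball of
radius `r`. -/
def DoublingD {α : Type*} (d : α → α → ℝ) : Prop :=
  ∃ K : ℕ, 0 < K ∧ ∀ (x : α) (r : ℝ), 0 < r →
    ∃ c : Finset α, c.card ≤ K ∧ ∀ y : α, d x y ≤ r → ∃ z ∈ c, d z y ≤ r / 2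

/-- The distance function `d` satisfies the Assouad covering condition with exponent `a`. -/
def FiniteAssouadWithD {α : Type*} (d : α → α → ℝ) (a : ℝ) : Prop :=
  ∃ C : ℝ, 0 < C ∧ ∀ (x : α) (R r : ℝ), 0 < r → r < R → R < 1 →
    ∃ 𝒰 : Finset (Set α),
      (∀ U ∈ 𝒰, ∀ p ∈ U, ∀ q ∈ U, d p q ≤ r) ∧
      ({y : α | d x y ≤ R} ⊆ ⋃ U ∈ 𝒰, U) ∧
      (𝒰.card : ℝ) ≤ C * (R / r) ^ a

/-
The excursion is a plateau of height `1/2` carrying, for every `n`, a cluster of `n` adjacent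
tents of height `ρₙ`. It is Lipschitz, so its graph is bi-Lipschitz to `[0,1]` and has Assouad
dimension `1`: slicing the interval gives covers of the right size, and Lebesgue measure shows
that no smaller exponent works. In the tree, the valley in front of the `n`-th cluster is at
distance `ρₙ` from each of the `n` peaks, and two peaks are at distance `2ρₙ` because the
function returns to `1/2` between them. These exact stars with arbitrarily many arms at small
scales make the tree starry and rule out both a finite Assouad exponent and doubling.
-/

theorem treeDist_comm (f : ℝ → ℝ) (x y : ℝ) : treeDist f x y = treeDist f y x := by
  rw [treeDist, treeDist, min_comm, max_comm, add_comm (f x)]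

section TreeDist

variable {f : ℝ → ℝ}

theorem treeDist_eq_of_isMinOn {x y w : ℝ} (hxy : x ≤ y) (hw : w ∈ Icc x y)
    (hmin : IsMinOn f (Icc x y) w) : treeDist f x y = f x + f y - 2 * f w := by
  have hleast : IsLeast (f '' Icc x y) (f w) :=
    ⟨mem_image_of_mem f hw, by rintro _ ⟨t, ht, rfl⟩; exact hmin ht⟩
  rw [treeDist, min_eq_left hxy, max_eq_right hxy, hleast.csInf_eq]

variable (hf : BddBelow (range f))
include hf

theorem sInf_image_Icc_le {u v w : ℝ} (hw : w ∈ Icc u v) : sInf (f '' Icc u v) ≤ f w :=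
  csInf_le (hf.mono (image_subset_range _ _)) (mem_image_of_mem f hw)

theorem sInf_image_Icc_anti {u v u' v' : ℝ} (hu : u' ≤ u) (hv : v ≤ v') (huv : u ≤ v) :
    sInf (f '' Icc u' v') ≤ sInf (f '' Icc u v) :=
  csInf_le_csInf (hf.mono (image_subset_range _ _)) ((nonempty_Icc.mpr huv).image f)
    (image_mono (Icc_subset_Icc hu hv))

theorem min_sInf_image_Icc_le {u v w : ℝ} (huw : u ≤ w) (hwv : w ≤ v) :
    min (sInf (f '' Icc u w)) (sInf (f '' Icc w v)) ≤ sInf (f '' Icc u v) := by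
  refine le_csInf ((nonempty_Icc.mpr (huw.trans hwv)).image f) ?_
  rintro _ ⟨t, ht, rfl⟩
  rcases le_total t w with htw | htw
  · exact (min_le_left _ _).trans (sInf_image_Icc_le hf ⟨ht.1, htw⟩)
  · exact (min_le_right _ _).trans (sInf_image_Icc_le hf ⟨htw, ht.2⟩)

theorem treeDist_triangle_of_le {x y z : ℝ} (hxz : x ≤ z) :
    treeDist f x z ≤ treeDist f x y + treeDist f y z := by
  simp only [treeDist, min_eq_left hxz, max_eq_right hxz]
  rcases le_total y x with hyx | hxy
  · rw [min_eq_right hyx, max_eq_left hyx, min_eq_left (hyx.trans hxz),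
      max_eq_right (hyx.trans hxz)]
    linarith [sInf_image_Icc_anti hf hyx le_rfl hxz,
      sInf_image_Icc_le hf (left_mem_Icc.mpr hyx)]
  rcases le_total y z with hyz | hzy
  · rw [min_eq_left hxy, max_eq_right hxy, min_eq_left hyz, max_eq_right hyz]
    have hsplit := min_sInf_image_Icc_le hf hxy hyz
    have hxy' := sInf_image_Icc_le hf (right_mem_Icc.mpr hxy)
    have hyz' := sInf_image_Icc_le hf (left_mem_Icc.mpr hyz)
    rcases min_cases (sInf (f '' Icc x y)) (sInf (f '' Icc y z)) with ⟨h, -⟩ | ⟨h, -⟩ <;>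
      linarith
  · rw [min_eq_left (hxz.trans hzy), max_eq_right (hxz.trans hzy), min_eq_right hzy,
      max_eq_left hzy]
    linarith [sInf_image_Icc_anti hf le_rfl hzy hxz,
      sInf_image_Icc_le hf (right_mem_Icc.mpr hzy)]

theorem treeDist_triangle (x y z : ℝ) : treeDist f x z ≤ treeDist f x y + treeDist f y z := by
  rcases le_total x z with hxz | hzx
  · exact treeDist_triangle_of_le hf hxz
  · rw [treeDist_comm f x z, treeDist_comm f x y, treeDist_comm f y z, add_comm]
    exact treeDist_triangle_of_le hf hzx

end TreeDist

section Stars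

variable {α : Type*} {d : α → α → ℝ}

def IsExactStar (d : α → α → ℝ) (ρ : ℝ) {n : ℕ} (c : α) (t : Fin n → α) : Prop :=
  (∀ i, d c (t i) = ρ) ∧ ∀ i j, i ≠ j → d (t i) (t j) = 2 * ρ

theorem IsExactStar.hasStarD {ρ η : ℝ} {n : ℕ} {c : α} {t : Fin n → α}
    (h : IsExactStar d ρ c t) (hρ : 0 < ρ) (hη : 0 ≤ η) : HasStarD d 2 η n := by
  refine ⟨ρ, hρ, Fin.cons c t, fun i j hi hj hij => ?_, fun i hi => ?_⟩
  · obtain ⟨i, rfl⟩ := Fin.exists_succ_eq.mpr hi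
    obtain ⟨j, rfl⟩ := Fin.exists_succ_eq.mpr hj
    rw [Fin.cons_succ, Fin.cons_succ, h.2 i j (ne_of_apply_ne _ hij)]
    constructor <;> nlinarith
  · obtain ⟨i, rfl⟩ := Fin.exists_succ_eq.mpr hi
    rw [Fin.cons_zero, Fin.cons_succ, h.1 i]
    constructor <;> nlinarith

theorem starryD_of_forall_isExactStar
    (h : ∀ n, ∃ ρ > 0, ∃ c, ∃ t : Fin n → α, IsExactStar d ρ c t) : StarryD d := by
  refine ⟨2, 1 / 4, by norm_num, by norm_num, by norm_num, fun n => ⟨2, le_rfl, ?_⟩⟩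
  obtain ⟨ρ, hρ, c, t, hstar⟩ := h n
  exact hstar.hasStarD hρ (by norm_num)

theorem not_finiteAssouadWithD_of_forall_isExactStar
    (h : ∀ n, ∃ ρ > 0, ρ < 1 / 2 ∧ ∃ c, ∃ t : Fin n → α, IsExactStar d ρ c t) (a : ℝ) :
    ¬ FiniteAssouadWithD d a := by
  rintro ⟨C, -, hC⟩
  obtain ⟨n, hn⟩ := exists_nat_gt (C * 2 ^ a)
  obtain ⟨ρ, hρ, hρ1, c, t, hcentre, htips⟩ := h n
  obtain ⟨𝒰, hdiam, hcover, hcard⟩ := hC c (2 * ρ) ρ hρ (by linarith) (by linarith)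
  have htips_le : n ≤ 𝒰.card := by
    simpa using Finset.card_le_card_of_forall_subsingleton (s := Finset.univ) (t := 𝒰)
      (fun i U => t i ∈ U)
      (fun i _ => by simpa using hcover (show d c (t i) ≤ 2 * ρ by linarith [hcentre i]))
      (fun U hU i hi j hj => by
        by_contra hij
        linarith [htips i j hij, hdiam U hU _ hi.2 _ hj.2])
  rw [mul_div_cancel_right₀ _ hρ.ne'] at hcard
  have : (n : ℝ) ≤ 𝒰.card := by exact_mod_cast htips_le
  linarith

theorem not_doublingD_of_forall_isExactStar (hcomm : ∀ x y, d x y = d y x)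
    (htri : ∀ x y z, d x z ≤ d x y + d y z)
    (h : ∀ n, ∃ ρ > 0, ∃ c, ∃ t : Fin n → α, IsExactStar d ρ c t) : ¬ DoublingD d := by
  rintro ⟨K, -, hK⟩
  obtain ⟨ρ, hρ, c, t, hcentre, htips⟩ := h (K + 1)
  obtain ⟨s, hs, hcover⟩ := hK c ρ hρ
  have htips_le : K + 1 ≤ s.card := by
    simpa using Finset.card_le_card_of_forall_subsingleton (s := Finset.univ) (t := s)
      (fun i z => d z (t i) ≤ ρ / 2)
      (fun i _ => hcover (t i) (hcentre i).le)
      (fun z _ i hi j hj => by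
        by_contra hij
        linarith [htips i j hij, htri (t i) z (t j), hcomm (t i) z, hi.2, hj.2])
  omega

end Stars

open MeasureTheory Filter Topology

theorem sub_le_card_mul_of_Icc_subset_biUnion {ι : Type*} (s : Finset ι) (U : ι → Set ℝ)
    {p q r : ℝ} (hr : 0 ≤ r) (hcover : Icc p q ⊆ ⋃ i ∈ s, U i)
    (hdiam : ∀ i ∈ s, ∀ x ∈ U i, ∀ y ∈ U i, |x - y| ≤ r) : q - p ≤ s.card * r := by
  have hvol : ∀ i ∈ s, volume (U i) ≤ ENNReal.ofReal r := fun i hi =>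
    (Real.volume_le_diam _).trans <| Metric.ediam_le fun x hx y hy => by
      rw [edist_dist, Real.dist_eq]
      exact ENNReal.ofReal_le_ofReal (hdiam i hi x hx y hy)
  have : ENNReal.ofReal (q - p) ≤ ENNReal.ofReal (s.card * r) :=
    calc ENNReal.ofReal (q - p) = volume (Icc p q) := Real.volume_Icc.symm
      _ ≤ ∑ i ∈ s, volume (U i) := (measure_mono hcover).trans (measure_biUnion_finset_le _ _)
      _ ≤ s.card • ENNReal.ofReal r := Finset.sum_le_card_nsmul _ _ _ hvol
      _ = ENNReal.ofReal (s.card * r) := by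
        rw [nsmul_eq_mul, ENNReal.ofReal_mul (Nat.cast_nonneg _), ENNReal.ofReal_natCast]
  exact (ENNReal.ofReal_le_ofReal_iff (by positivity)).mp this

section BiLipschitzInterval

variable {d : Icc (0 : ℝ) 1 → Icc (0 : ℝ) 1 → ℝ} {L : ℝ}
  (hlow : ∀ a b : Icc (0 : ℝ) 1, |(a : ℝ) - b| ≤ d a b)
  (hup : ∀ a b : Icc (0 : ℝ) 1, d a b ≤ L * |(a : ℝ) - b|)
include hlow hup

theorem one_le_const_of_bilipschitz : 1 ≤ L := by
  simpa using (hlow ⟨0, by norm_num⟩ ⟨1, by norm_num⟩).trans (hup _ _)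

theorem finiteAssouadWithD_one_of_bilipschitz : FiniteAssouadWithD d 1 := by
  have hL := one_le_const_of_bilipschitz hlow hup
  refine ⟨2 * L + 1, by linarith, fun x R r hr hrR _ => ?_⟩
  set s := r / L
  have hs : 0 < s := by positivity
  set N := ⌊2 * R / s⌋₊ + 1
  let U : ℕ → Set (Icc (0 : ℝ) 1) := fun k =>
    {y | k * s ≤ (y : ℝ) - (x - R) ∧ (y : ℝ) - (x - R) ≤ (k + 1) * s}
  refine ⟨(Finset.range N).image U, ?_, ?_, ?_⟩
  · simp only [Finset.mem_image, Finset.mem_range]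
    rintro _ ⟨k, -, rfl⟩ p ⟨hp₁, hp₂⟩ q ⟨hq₁, hq₂⟩
    calc d p q ≤ L * |(p : ℝ) - q| := hup p q
      _ ≤ L * s := by gcongr; rw [abs_le]; constructor <;> linarith
      _ = r := mul_div_cancel₀ r (by positivity)
  · intro y hy
    have hxy := abs_le.mp ((hlow x y).trans hy)
    set t := (y : ℝ) - (x - R)
    have ht : 0 ≤ t / s := div_nonneg (by linarith) hs.le
    refine mem_biUnion
      (Finset.mem_image_of_mem U (Finset.mem_range.mpr (show ⌊t / s⌋₊ < N from ?_))) ⟨?_, ?_⟩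
    · exact Nat.lt_succ_of_le (Nat.floor_le_floor (by gcongr; linarith))
    · exact (le_div_iff₀ hs).mp (Nat.floor_le ht)
    · exact ((div_lt_iff₀ hs).mp (Nat.lt_floor_add_one _)).le
  · have hRr : 1 ≤ R / r := (one_le_div hr).mpr hrR.le
    calc (((Finset.range N).image U).card : ℝ) ≤ N := by
          exact_mod_cast Finset.card_image_le.trans (Finset.card_range N).le
      _ ≤ 2 * R / s + 1 := by
          simp only [N, Nat.cast_add, Nat.cast_one, add_le_add_iff_right]
          exact Nat.floor_le (div_nonneg (by linarith) hs.le)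
      _ = 2 * L * (R / r) + 1 := by simp only [s]; field_simp
      _ ≤ (2 * L + 1) * (R / r) ^ (1 : ℝ) := by rw [Real.rpow_one]; nlinarith

theorem one_le_of_finiteAssouadWithD_of_bilipschitz {a : ℝ} (ha : 0 ≤ a)
    (h : FiniteAssouadWithD d a) : 1 ≤ a := by
  have hL := one_le_const_of_bilipschitz hlow hup
  by_contra! ha1
  obtain ⟨C, hC, hcov⟩ := h
  -- The ball of radius `1/2` about `1/2` contains an interval of length `1/L`, whereas the
  -- cover bounds its length by `C r^(1-a)`, which tends to `0` with `r`.
  let ℓ := 1 / (2 * L)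
  have hℓ : ℓ ≤ 1 / 2 := by simp only [ℓ]; gcongr; linarith
  have hsmall : ∀ᶠ r in 𝓝[>] (0 : ℝ), C * r ^ (1 - a) < 1 / L ∧ r < 1 / 2 := by
    have hlim : Tendsto (fun r : ℝ => C * r ^ (1 - a)) (𝓝 0) (𝓝 0) := by
      simpa [Real.zero_rpow (by linarith : (1 - a) ≠ 0)] using
        ((Real.continuousAt_rpow_const 0 (1 - a) (Or.inr (by linarith))).tendsto).const_mul C
    exact nhdsWithin_le_nhds
      ((hlim.eventually (gt_mem_nhds (one_div_pos.mpr (by linarith)))).and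
        (gt_mem_nhds (by norm_num)))
  obtain ⟨r, ⟨hCr, hr2⟩, hr⟩ := (hsmall.and self_mem_nhdsWithin).exists
  obtain ⟨𝒰, hdiam, hcover, hcard⟩ := hcov ⟨1 / 2, by norm_num⟩ (1 / 2) r hr hr2 (by norm_num)
  have hlen : 2 * ℓ ≤ 𝒰.card * r := by
    have := sub_le_card_mul_of_Icc_subset_biUnion 𝒰 (fun V => Subtype.val '' V) hr.le
      (p := 1 / 2 - ℓ) (q := 1 / 2 + ℓ) ?_ ?_
    · linarith
    · intro y hy
      have hy01 : y ∈ Icc (0 : ℝ) 1 := ⟨by linarith [hy.1], by linarith [hy.2]⟩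
      have hball : d ⟨1 / 2, by norm_num⟩ ⟨y, hy01⟩ ≤ 1 / 2 :=
        calc _ ≤ L * |1 / 2 - y| := hup _ _
          _ ≤ L * ℓ := by gcongr; exact abs_le.mpr ⟨by linarith [hy.2], by linarith [hy.1]⟩
          _ = 1 / 2 := by simp only [ℓ]; field_simp
      obtain ⟨V, hV, hyV⟩ := mem_iUnion₂.mp (hcover hball)
      exact mem_iUnion₂.mpr ⟨V, hV, ⟨y, hy01⟩, hyV, rfl⟩
    · rintro V hV _ ⟨p, hp, rfl⟩ _ ⟨q, hq, rfl⟩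
      exact (hlow p q).trans (hdiam V hV p hp q hq)
  have hpow : (1 / 2 / r) ^ a * r ≤ r ^ (1 - a) := by
    rw [Real.div_rpow (by norm_num) hr.le, Real.rpow_sub hr, Real.rpow_one, div_mul_eq_mul_div,
      div_le_div_iff_of_pos_right (by positivity)]
    exact mul_le_of_le_one_left hr.le (Real.rpow_le_one (by norm_num) (by norm_num) ha)
  have : 1 / L ≤ C * r ^ (1 - a) :=
    calc 1 / L = 2 * ℓ := by simp only [ℓ]; field_simp
      _ ≤ 𝒰.card * r := hlen
      _ ≤ C * (1 / 2 / r) ^ a * r := by gcongr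
      _ ≤ C * r ^ (1 - a) := by rw [mul_assoc]; gcongr
  linarith

theorem isGLB_finiteAssouadWithD_of_bilipschitz :
    IsGLB {a : ℝ | 0 ≤ a ∧ FiniteAssouadWithD d a} 1 :=
  IsLeast.isGLB ⟨⟨zero_le_one, finiteAssouadWithD_one_of_bilipschitz hlow hup⟩,
    fun _ ha => one_le_of_finiteAssouadWithD_of_bilipschitz hlow hup ha.1 ha.2⟩

end BiLipschitzInterval

theorem abs_sub_le_dGraph (f : ℝ → ℝ) (a b : Icc (0 : ℝ) 1) :
    |(a : ℝ) - b| ≤ dGraph f a b := by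
  rw [dGraph, ← Real.sqrt_sq_eq_abs]
  exact Real.sqrt_le_sqrt (le_add_of_nonneg_right (sq_nonneg _))

theorem dGraph_le_of_lipschitzWith {f : ℝ → ℝ} {K : NNReal} (hf : LipschitzWith K f)
    (a b : Icc (0 : ℝ) 1) : dGraph f a b ≤ (1 + K) * |(a : ℝ) - b| := by
  have hfab : |f a - f b| ≤ K * |(a : ℝ) - b| := by
    simpa only [Real.dist_eq] using hf.dist_le_mul a b
  calc dGraph f a b ≤ √((|(a : ℝ) - b| + |f a - f b|) ^ 2) := by
        rw [dGraph]; gcongr; nlinarith [sq_abs ((a : ℝ) - b), sq_abs (f a - f b),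
          abs_nonneg ((a : ℝ) - b), abs_nonneg (f a - f b)]
    _ = |(a : ℝ) - b| + |f a - f b| := Real.sqrt_sq (by positivity)
    _ ≤ (1 + K) * |(a : ℝ) - b| := by linarith

namespace StarryExcursion
open Metric

/- A trapezoid of height `1/2` carrying, for each `m`, a cluster of `m` adjacent tents of height
`radius m` with bases `[valley m j, valley m (j + 1)]`. The `m`-th cluster lies in
`[1/4 + 4^-(m+1), 1/4 + (3/2) 4^-(m+1)]`, and these intervals are pairwise disjoint. -/
noncomputable def plateau (x : ℝ) : ℝ := max 0 (min (min (2 * x) (2 - 2 * x)) (1 / 2))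

noncomputable def radius (m : ℕ) : ℝ := (1 / 4) ^ (m + 1) / (4 * (m + 1))

noncomputable def valley (m k : ℕ) : ℝ := 1 / 4 + (1 / 4) ^ (m + 1) + 2 * k * radius m

noncomputable def peak (m j : ℕ) : ℝ := valley m j + radius m

def teeth : Set ℝ := ⋃ m, ⋃ j < m, Ioo (valley m j) (valley m (j + 1))

noncomputable def excursion (x : ℝ) : ℝ := plateau x + infDist x teethᶜ

theorem plateau_nonneg (x : ℝ) : 0 ≤ plateau x := le_max_left _ _

theorem plateau_pos {x : ℝ} (hx : x ∈ Ioo 0 1) : 0 < plateau x :=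
  lt_max_of_lt_right (lt_min (lt_min (by linarith [hx.1]) (by linarith [hx.2])) (by norm_num))

theorem plateau_eq_half {x : ℝ} (hx : x ∈ Icc (1 / 4) (3 / 4)) : plateau x = 1 / 2 := by
  rw [plateau, min_eq_right (le_min (by linarith [hx.1]) (by linarith [hx.2])),
    max_eq_right (by norm_num)]

theorem lipschitzWith_plateau : LipschitzWith 2 plateau := by
  have h₁ : LipschitzWith 2 fun x : ℝ => 2 * x := .of_dist_le_mul fun x y => by
    rw [Real.dist_eq, Real.dist_eq, ← mul_sub, abs_mul]; norm_num
  have h₂ : LipschitzWith 2 fun x : ℝ => 2 - 2 * x := .of_dist_le_mul fun x y => by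
    rw [Real.dist_eq, Real.dist_eq, sub_sub_sub_cancel_left, ← mul_sub, abs_mul, abs_sub_comm]
    norm_num
  have h := ((h₁.min h₂).min_const (1 / 2)).const_max 0
  rw [max_self] at h
  exact h

theorem radius_pos (m : ℕ) : 0 < radius m := by unfold radius; positivity

theorem radius_lt_half (m : ℕ) : radius m < 1 / 2 := by
  have : (1 / 4 : ℝ) ^ (m + 1) ≤ 1 := pow_le_one₀ (by norm_num) (by norm_num)
  rw [radius, div_lt_iff₀ (by positivity)]
  nlinarith [(m.cast_nonneg : (0 : ℝ) ≤ m)]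

theorem valley_strictMono (m : ℕ) : StrictMono (valley m) := fun k l hkl => by
  have : (k : ℝ) < l := by exact_mod_cast hkl
  unfold valley; nlinarith [radius_pos m]

theorem valley_lt_peak (m j : ℕ) : valley m j < peak m j := lt_add_of_pos_right _ (radius_pos m)

theorem valley_succ (m j : ℕ) : valley m (j + 1) = peak m j + radius m := by
  rw [peak, valley, valley]; push_cast; ring

theorem valley_mem_Icc {m k : ℕ} (hk : k ≤ m) :
    valley m k ∈ Icc (1 / 4 + (1 / 4) ^ (m + 1)) (1 / 4 + 3 / 2 * (1 / 4) ^ (m + 1)) := by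
  have hk' : (k : ℝ) ≤ m := by exact_mod_cast hk
  have hq : (0 : ℝ) < (1 / 4) ^ (m + 1) := by positivity
  have : 2 * k * radius m ≤ (1 / 4) ^ (m + 1) / 2 := by
    rw [radius, mul_div_assoc', div_le_div_iff₀ (by positivity) (by norm_num)]
    nlinarith
  constructor <;> unfold valley <;> nlinarith [radius_pos m]

theorem cluster_upper_lt_lower {m m' : ℕ} (h : m' < m) :
    1 / 4 + 3 / 2 * (1 / 4 : ℝ) ^ (m + 1) < 1 / 4 + (1 / 4) ^ (m' + 1) := by
  have : (1 / 4 : ℝ) ^ (m + 1) ≤ (1 / 4) ^ (m' + 1 + 1) :=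
    pow_le_pow_of_le_one (by norm_num) (by norm_num) (by omega)
  rw [pow_succ (1 / 4 : ℝ) (m' + 1)] at this
  nlinarith [pow_pos (by norm_num : (0 : ℝ) < 1 / 4) (m + 1)]

theorem valley_mem_plateau {m k : ℕ} (hk : k ≤ m) : valley m k ∈ Icc (1 / 4) (3 / 4) := by
  have h := valley_mem_Icc hk
  have : (1 / 4 : ℝ) ^ (m + 1) ≤ 1 / 4 := pow_le_of_le_one (by norm_num) (by norm_num) (by omega)
  constructor <;> nlinarith [h.1, h.2, pow_pos (by norm_num : (0 : ℝ) < 1 / 4) (m + 1)]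

theorem mem_teeth {m j : ℕ} (hj : j < m) {x : ℝ}
    (hx : x ∈ Ioo (valley m j) (valley m (j + 1))) : x ∈ teeth :=
  mem_iUnion.mpr ⟨m, mem_iUnion₂.mpr ⟨j, hj, hx⟩⟩

theorem valley_notMem_teeth {m k : ℕ} (hk : k ≤ m) : valley m k ∉ teeth := by
  simp only [teeth, mem_iUnion, mem_Ioo]
  rintro ⟨m', j, hj, hlo, hhi⟩
  rcases lt_trichotomy m' m with hm | rfl | hm
  · linarith [(valley_mem_Icc hk).2, (valley_mem_Icc hj.le).1, cluster_upper_lt_lower hm]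
  · have := (valley_strictMono m').lt_iff_lt.mp hlo
    have := (valley_strictMono m').lt_iff_lt.mp hhi
    omega
  · linarith [(valley_mem_Icc hk).1, (valley_mem_Icc (Nat.succ_le_of_lt hj)).2,
      cluster_upper_lt_lower hm]

theorem teeth_subset : teeth ⊆ Icc (1 / 4) (3 / 4) := by
  simp only [teeth, iUnion_subset_iff]
  intro m j hj x hx
  exact ⟨(valley_mem_plateau hj.le).1.trans hx.1.le,
    hx.2.le.trans (valley_mem_plateau (Nat.succ_le_of_lt hj)).2⟩

theorem peak_mem_plateau {m j : ℕ} (hj : j < m) : peak m j ∈ Icc (1 / 4) (3 / 4) :=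
  teeth_subset <| mem_teeth hj
    ⟨valley_lt_peak m j, by rw [valley_succ]; linarith [radius_pos m]⟩

theorem infDist_peak {m j : ℕ} (hj : j < m) : infDist (peak m j) teethᶜ = radius m := by
  apply le_antisymm
  · calc infDist (peak m j) teethᶜ ≤ dist (peak m j) (valley m (j + 1)) :=
          infDist_le_dist_of_mem (valley_notMem_teeth hj)
      _ = radius m := by rw [valley_succ, Real.dist_eq]; simp [abs_of_pos (radius_pos m)]
  · refine (le_infDist ⟨_, valley_notMem_teeth hj⟩).mpr fun y hy => ?_
    by_contra! hlt
    apply hy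
    rw [Real.dist_eq, abs_sub_lt_iff] at hlt
    exact mem_teeth hj ⟨by rw [peak] at hlt; linarith, by rw [valley_succ]; linarith⟩

theorem lipschitzWith_excursion : LipschitzWith 3 excursion := by
  have h := lipschitzWith_plateau.add (lipschitz_infDist_pt teethᶜ)
  rw [show (2 + 1 : NNReal) = 3 by norm_num] at h
  exact h

theorem excursion_nonneg (x : ℝ) : 0 ≤ excursion x :=
  add_nonneg (plateau_nonneg x) infDist_nonneg

theorem excursion_pos {x : ℝ} (hx : x ∈ Ioo 0 1) : 0 < excursion x :=
  add_pos_of_pos_of_nonneg (plateau_pos hx) infDist_nonneg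

theorem excursion_eq_plateau {x : ℝ} (hx : x ∉ teeth) : excursion x = plateau x := by
  rw [excursion, infDist_zero_of_mem hx, add_zero]

theorem excursion_zero : excursion 0 = 0 := by
  rw [excursion_eq_plateau fun h => by linarith [(teeth_subset h).1]]
  norm_num [plateau]

theorem excursion_one : excursion 1 = 0 := by
  rw [excursion_eq_plateau fun h => by linarith [(teeth_subset h).2]]
  norm_num [plateau]

theorem half_le_excursion {x : ℝ} (hx : x ∈ Icc (1 / 4) (3 / 4)) : 1 / 2 ≤ excursion x := by
  rw [excursion, plateau_eq_half hx]
  linarith [infDist_nonneg (x := x) (s := teethᶜ)]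

theorem excursion_valley {m k : ℕ} (hk : k ≤ m) : excursion (valley m k) = 1 / 2 := by
  rw [excursion_eq_plateau (valley_notMem_teeth hk), plateau_eq_half (valley_mem_plateau hk)]

theorem excursion_peak {m j : ℕ} (hj : j < m) : excursion (peak m j) = 1 / 2 + radius m := by
  rw [excursion, plateau_eq_half (peak_mem_plateau hj), infDist_peak hj]

theorem isMinOn_excursion_valley {m k : ℕ} (hk : k ≤ m) {x y : ℝ} (hx : 1 / 4 ≤ x)
    (hy : y ≤ 3 / 4) : IsMinOn excursion (Icc x y) (valley m k) :=
  isMinOn_iff.mpr fun _ ht =>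
    (excursion_valley hk).trans_le (half_le_excursion ⟨hx.trans ht.1, ht.2.trans hy⟩)

theorem treeDist_valley_peak {m j : ℕ} (hj : j < m) :
    treeDist excursion (valley m 0) (peak m j) = radius m := by
  have hle : valley m 0 ≤ peak m j :=
    ((valley_strictMono m).monotone j.zero_le).trans (valley_lt_peak m j).le
  rw [treeDist_eq_of_isMinOn hle (left_mem_Icc.mpr hle)
      (isMinOn_excursion_valley (Nat.zero_le m) (valley_mem_plateau (Nat.zero_le m)).1
        (peak_mem_plateau hj).2),
    excursion_valley (Nat.zero_le m), excursion_peak hj]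
  ring

theorem treeDist_peak_peak {m i j : ℕ} (hij : i < j) (hj : j < m) :
    treeDist excursion (peak m i) (peak m j) = 2 * radius m := by
  have hmid : valley m (i + 1) ∈ Icc (peak m i) (peak m j) :=
    ⟨by rw [valley_succ]; linarith [radius_pos m],
      ((valley_strictMono m).monotone (Nat.succ_le_of_lt hij)).trans (valley_lt_peak m j).le⟩
  rw [treeDist_eq_of_isMinOn (hmid.1.trans hmid.2) hmid
      (isMinOn_excursion_valley (by omega) (peak_mem_plateau (hij.trans hj)).1
        (peak_mem_plateau hj).2),
    excursion_peak (hij.trans hj), excursion_peak hj, excursion_valley (by omega)]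
  ring

theorem exists_isExactStar (n : ℕ) :
    ∃ c, ∃ t : Fin n → Icc (0 : ℝ) 1, IsExactStar (dIcc excursion) (radius n) c t := by
  have hmem : Icc (1 / 4 : ℝ) (3 / 4) ⊆ Icc 0 1 := Icc_subset_Icc (by norm_num) (by norm_num)
  refine ⟨⟨valley n 0, hmem (valley_mem_plateau n.zero_le)⟩,
    fun i => ⟨peak n i, hmem (peak_mem_plateau i.2)⟩, fun i => treeDist_valley_peak i.2,
    fun i j hij => ?_⟩
  rcases lt_or_gt_of_ne (Fin.val_ne_of_ne hij) with h | h
  · exact treeDist_peak_peak h j.2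
  · exact (treeDist_comm _ _ _).trans (treeDist_peak_peak h i.2)

end StarryExcursion

/-- There exists a continuous excursion function `f : [0,1] → [0,∞)` whose
graph `G_f ⊂ ℝ²` is a bi-Lipschitz image of the unit interval — hence has Assouad dimension
equal to `1` — while the continuum tree `T_f = ([0,1]/≈_f, d_f)` is starry (and therefore has
infinite Assouad dimension and is not doubling). -/
theorem exists_excursion_graph_dimension_one_tree_starry :
    ∃ f : ℝ → ℝ,
      -- `f` is an excursion function
      (ContinuousOn f (Icc 0 1) ∧ f 0 = 0 ∧ f 1 = 0 ∧
        (∀ u ∈ Ioo (0 : ℝ) 1, 0 < f u) ∧ ∀ u ∈ Icc (0 : ℝ) 1, 0 ≤ f u) ∧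
      -- the parametrisation `x ↦ (x, f x)` of the graph is bi-Lipschitz on `[0,1]`
      (∃ C : ℝ, 1 ≤ C ∧ ∀ a b : Set.Icc (0 : ℝ) 1,
        C⁻¹ * |(a : ℝ) - b| ≤ dGraph f a b ∧ dGraph f a b ≤ C * |(a : ℝ) - b|) ∧
      -- hence the graph has Assouad dimension exactly `1`
      IsGLB {a : ℝ | 0 ≤ a ∧ FiniteAssouadWithD (dGraph f) a} 1 ∧
      -- while the continuum tree is starry, of infinite Assouad dimension, and not doubling
      StarryD (dIcc f) ∧
      (¬ ∃ a : ℝ, 0 ≤ a ∧ FiniteAssouadWithD (dIcc f) a) ∧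
      ¬ DoublingD (dIcc f) := by
  open StarryExcursion in
  have hstars : ∀ n, ∃ ρ > 0, ∃ c, ∃ t : Fin n → Icc (0 : ℝ) 1,
      IsExactStar (dIcc excursion) ρ c t :=
    fun n => ⟨radius n, radius_pos n, exists_isExactStar n⟩
  have hup : ∀ a b, dGraph excursion a b ≤ 4 * |(a : ℝ) - b| := fun a b => by
    simpa only [NNReal.coe_ofNat, show (1 : ℝ) + 3 = 4 by norm_num] using
      dGraph_le_of_lipschitzWith lipschitzWith_excursion a b
  have hbdd : BddBelow (range excursion) := ⟨0, forall_mem_range.mpr excursion_nonneg⟩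
  refine ⟨excursion, ⟨lipschitzWith_excursion.continuous.continuousOn, excursion_zero,
      excursion_one, fun _ => excursion_pos, fun u _ => excursion_nonneg u⟩,
    ⟨4, by norm_num, fun a b => ⟨?_, hup a b⟩⟩,
    isGLB_finiteAssouadWithD_of_bilipschitz (abs_sub_le_dGraph excursion) hup,
    starryD_of_forall_isExactStar hstars,
    fun ⟨a, _, ha⟩ => not_finiteAssouadWithD_of_forall_isExactStar
      (fun n => ⟨radius n, radius_pos n, radius_lt_half n, exists_isExactStar n⟩) a ha,
    not_doublingD_of_forall_isExactStar (fun _ _ => treeDist_comm _ _ _)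
      (fun _ _ _ => treeDist_triangle hbdd _ _ _) hstars⟩
  exact (mul_le_of_le_one_left (abs_nonneg _) (by norm_num)).trans
    (abs_sub_le_dGraph excursion a b)
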